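/- arXiv:2109.13495 — 2 statements merged into one kernel-verified Lean document; each statement's English description precedes it below -/
import Mathlib

section
/- Let A_1, …, A_N be n×n nonnegative matrices that pairwise commute with respect to the max-times product and satisfy μ(A_i) ≤ 1 for every i. Then there exists an integer q ≥ 1 such that: for each i and each 1 ≤ j ≤ q the entrywise limit Ã_i^{(j)} := lim_{k→∞} A_i^{⊗(kq+j)} exists; and for every p ≥ 1, every word ω ∈ {1,…,N}^p in which the letter i occurs p_i times, and every 1 ≤ j ≤ q, lim_{k→∞} A_ω^{⊗(kq+j)} = (Ã_1^{(j)})^{⊗p_1} ⊗ (Ã_2^{(j)})^{⊗p_2} ⊗ ⋯ ⊗ (Ã_N^{(j)})^{⊗p_N}. -/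
open Filter Topology

/-- Max-times product of two square nonnegative matrices. -/
noncomputable def mProd {m : Type*} [Fintype m] (A B : Matrix m m NNReal) : Matrix m m NNReal :=
  fun i j => Finset.univ.sup fun k => A i k * B k j

/-- Max-times powers: `mPow A 0 = I`, `mPow A (k+1) = A ⊗ mPow A k`. -/
noncomputable def mPow {m : Type*} [Fintype m] [DecidableEq m] (A : Matrix m m NNReal) :
    ℕ → Matrix m m NNReal
  | 0 => 1
  | k + 1 => mProd A (mPow A k)

/-- Max-times action of a matrix on a nonnegative vector. -/
noncomputable def mVec {m : Type*} [Fintype m] (A : Matrix m m NNReal) (x : m → NNReal) :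
    m → NNReal :=
  fun i => Finset.univ.sup fun k => A i k * x k

/-- Maximum circuit geometric mean of a nonnegative matrix. -/
noncomputable def mu {m : Type*} [Fintype m] [DecidableEq m] (A : Matrix m m NNReal) : NNReal :=
  (Finset.Icc 1 (Fintype.card m)).sup fun ℓ =>
    Finset.univ.sup fun i => (mPow A ℓ i i) ^ ((ℓ : ℝ)⁻¹)

/-- The max-times product `A_{ω_p} ⊗ ⋯ ⊗ A_{ω_1}` associated to a word `ω`. -/
noncomputable def wordProd {m : Type*} [Fintype m] [DecidableEq m] {N : ℕ}
    (A : Fin N → Matrix m m NNReal) : ∀ {p : ℕ}, (Fin p → Fin N) → Matrix m m NNReal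
  | 0, _ => 1
  | p + 1, ω => mProd (A (ω (Fin.last p))) (wordProd A fun i : Fin p => ω i.castSucc)

/-- The max-times product `M 0 ⊗ M 1 ⊗ ⋯ ⊗ M (N-1)` of a finite family, in order. -/
noncomputable def seqProd {m : Type*} [Fintype m] [DecidableEq m] :
    ∀ {N : ℕ}, (Fin N → Matrix m m NNReal) → Matrix m m NNReal
  | 0, _ => 1
  | _ + 1, M => mProd (M 0) (seqProd fun i => M i.succ)

/-!
Max-times products are ordinary matrix products over the commutative semiring `(ℝ≥0, max, ·)`.
Hence a word in pairwise commuting matrices equals `A₁^{p₁} ⊗ ⋯ ⊗ A_N^{p_N}`, its `M`-th power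
is `(A₁^M)^{p₁} ⊗ ⋯ ⊗ (A_N^M)^{p_N}`, and by continuity of the product it suffices that each
`A_i^{kq+j}` converges as `k → ∞`.

For one matrix `A` with `μ(A) ≤ 1` take `q = n!`. The entry `(A^k)_{uv}` is the maximal weight of
a walk of length `k` from `u` to `v`; cutting out circuits, each of weight at most
`μ(A)^length`, bounds `A^k`. Call `z` critical when `(A^q)_{zz} = 1`. The walks through a
critical vertex give a part `B_k ≤ A^k` which is nondecreasing along `k ↦ k + q` (insert a
critical circuit of weight `1`), hence convergent. The other walks live in the matrix with
critical rows and columns erased, whose `μ` is `< 1`, so they decay geometrically. Thus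
`B_k ≤ A^k ≤ B_k ⊔ o(1)` converges along `k ↦ kq + j`.
-/

open scoped Nat

def MaxTimes := NNReal

namespace MaxTimes

def ofNNReal : NNReal ≃ MaxTimes := Equiv.refl _

instance : Zero MaxTimes := ⟨(0 : NNReal)⟩
instance : One MaxTimes := ⟨(1 : NNReal)⟩
instance : Add MaxTimes := ⟨max (α := NNReal)⟩
instance : Mul MaxTimes := ⟨(· * · : NNReal → NNReal → NNReal)⟩

instance : CommSemiring MaxTimes where
  add_assoc := max_assoc (α := NNReal)
  zero_add := zero_max (α := NNReal)
  add_zero := max_zero (α := NNReal)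
  add_comm := max_comm (α := NNReal)
  nsmul := nsmulRec
  left_distrib := mul_max (α := NNReal)
  right_distrib := max_mul (α := NNReal)
  zero_mul := zero_mul (M₀ := NNReal)
  mul_zero := mul_zero (M₀ := NNReal)
  mul_assoc := mul_assoc (G := NNReal)
  one_mul := one_mul (M := NNReal)
  mul_one := mul_one (M := NNReal)
  mul_comm := mul_comm (G := NNReal)

instance : TopologicalSpace MaxTimes := inferInstanceAs (TopologicalSpace NNReal)

instance : ContinuousAdd MaxTimes := ⟨continuous_max (α := NNReal)⟩

instance : ContinuousMul MaxTimes := ⟨continuous_mul (M := NNReal)⟩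

lemma sum_ofNNReal {ι : Type*} (s : Finset ι) (f : ι → NNReal) :
    ∑ i ∈ s, ofNNReal (f i) = ofNNReal (s.sup f) := by
  classical
  induction s using Finset.induction with
  | empty => rfl
  | insert a s ha ih => rw [Finset.sum_insert ha, ih, Finset.sup_insert]; rfl

end MaxTimes

section MaxTimesMatrix

variable {m : Type*}

def toMaxTimes : Matrix m m NNReal ≃ Matrix m m MaxTimes := Equiv.refl _

lemma tendsto_toMaxTimes_iff {α : Type*} {l : Filter α} {X : α → Matrix m m NNReal}
    {P : Matrix m m NNReal} :
    Tendsto (fun k => toMaxTimes (X k)) l (𝓝 (toMaxTimes P)) ↔ Tendsto X l (𝓝 P) :=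
  Iff.rfl

variable [Fintype m]

lemma toMaxTimes_mProd (A B : Matrix m m NNReal) :
    toMaxTimes (mProd A B) = toMaxTimes A * toMaxTimes B := by
  ext i j
  exact (MaxTimes.sum_ofNNReal _ _).symm

lemma commute_toMaxTimes {B C : Matrix m m NNReal} (h : mProd B C = mProd C B) :
    Commute (toMaxTimes B) (toMaxTimes C) := by
  simp only [Commute, SemiconjBy, ← toMaxTimes_mProd, h]

lemma le_mProd (B C : Matrix m m NNReal) (i j k : m) : B i k * C k j ≤ mProd B C i j :=
  Finset.le_sup (f := fun k => B i k * C k j) (Finset.mem_univ k)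

variable [DecidableEq m]

lemma toMaxTimes_mPow (A : Matrix m m NNReal) (k : ℕ) :
    toMaxTimes (mPow A k) = toMaxTimes A ^ k := by
  induction k with
  | zero => rfl
  | succ k ih => rw [pow_succ', ← ih, ← toMaxTimes_mProd]; rfl

lemma toMaxTimes_seqProd {N : ℕ} (B : Fin N → Matrix m m NNReal) :
    toMaxTimes (seqProd B) = (List.ofFn fun i => toMaxTimes (B i)).prod := by
  induction N with
  | zero => rfl
  | succ N ih => rw [List.ofFn_succ, List.prod_cons, ← ih, ← toMaxTimes_mProd]; rfl

section Continuity

variable {α : Type*} {l : Filter α}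

lemma tendsto_mPow {X : α → Matrix m m NNReal} {P : Matrix m m NNReal}
    (h : Tendsto X l (𝓝 P)) (c : ℕ) : Tendsto (fun k => mPow (X k) c) l (𝓝 (mPow P c)) := by
  rw [← tendsto_toMaxTimes_iff]
  simp only [toMaxTimes_mPow]
  exact (tendsto_toMaxTimes_iff.2 h).pow c

lemma tendsto_seqProd {N : ℕ} {X : α → Fin N → Matrix m m NNReal}
    {P : Fin N → Matrix m m NNReal} (h : ∀ i, Tendsto (fun k => X k i) l (𝓝 (P i))) :
    Tendsto (fun k => seqProd (X k)) l (𝓝 (seqProd P)) := by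
  rw [← tendsto_toMaxTimes_iff]
  simp only [toMaxTimes_seqProd, List.ofFn_eq_map]
  exact tendsto_list_prod (f := fun i k => toMaxTimes (X k i)) _ fun i _ => h i

end Continuity

variable (A : Matrix m m NNReal)

lemma mPow_one : mPow A 1 = A :=
  toMaxTimes.injective <| by rw [toMaxTimes_mPow, pow_one]

lemma mPow_add (a b : ℕ) : mPow A (a + b) = mProd (mPow A a) (mPow A b) :=
  toMaxTimes.injective <| by simp only [toMaxTimes_mPow, toMaxTimes_mProd, pow_add]

lemma mPow_mul_mPow_le (a b : ℕ) (u w v : m) :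
    mPow A a u w * mPow A b w v ≤ mPow A (a + b) u v :=
  mPow_add A a b ▸ le_mProd _ _ u v w

lemma mPow_mono {B : Matrix m m NNReal} (h : ∀ i j, A i j ≤ B i j) (k : ℕ) (i j : m) :
    mPow A k i j ≤ mPow B k i j := by
  induction k generalizing i with
  | zero => exact le_rfl
  | succ k ih =>
    exact Finset.sup_le fun l _ => (mul_le_mul' (h i l) (ih l)).trans (le_mProd _ _ _ _ _)

lemma one_le_mPow_mul {ℓ : ℕ} {z : m} (h : 1 ≤ mPow A ℓ z z) (t : ℕ) :
    1 ≤ mPow A (ℓ * t) z z := by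
  induction t with
  | zero => simp [mPow]
  | succ t ih => exact (one_le_mul ih h).trans (mPow_mul_mPow_le A _ _ z z z)

end MaxTimesMatrix

section Walks

variable {m : Type*} (A : Matrix m m NNReal)

/-- A walk from `u` is encoded by the list of vertices it visits after `u`. -/
def walkEnd : m → List m → m
  | u, [] => u
  | _, z :: t => walkEnd z t

def walkWeight : m → List m → NNReal
  | _, [] => 1
  | u, z :: t => A u z * walkWeight z t

lemma walkEnd_append (u : m) (s t : List m) : walkEnd u (s ++ t) = walkEnd (walkEnd u s) t := by
  induction s generalizing u with
  | nil => rfl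
  | cons z s ih => exact ih z

lemma walkWeight_append (u : m) (s t : List m) :
    walkWeight A u (s ++ t) = walkWeight A u s * walkWeight A (walkEnd u s) t := by
  induction s generalizing u with
  | nil => simp [walkWeight, walkEnd]
  | cons z s ih => simp only [List.cons_append, walkWeight, walkEnd, ih, mul_assoc]

variable [Fintype m]

/-- Pigeonhole on the first `card m + 1` prefixes of a long walk. -/
lemma exists_closed_subwalk (u : m) (l : List m) (hl : Fintype.card m < l.length) :
    ∃ l₁ l₂ l₃ : List m, l = l₁ ++ l₂ ++ l₃ ∧ l₂ ≠ [] ∧ l₂.length ≤ Fintype.card m ∧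
      walkEnd (walkEnd u l₁) l₂ = walkEnd u l₁ := by
  obtain ⟨i, j, hne, hij⟩ := Fintype.exists_ne_map_eq_of_card_lt
    (fun i : Fin (Fintype.card m + 1) => walkEnd u (l.take i)) (by simp)
  wlog hlt : i < j generalizing i j
  · exact this j i hne.symm hij.symm (hne.symm.lt_of_le (not_lt.1 hlt))
  have hj : (j : ℕ) ≤ l.length := by omega
  have hprefix : l.take i ++ (l.take j).drop i = l.take j := by
    have htake : (l.take j).take i = l.take i := by rw [List.take_take, min_eq_left (by omega)]
    rw [← htake, List.take_append_drop]
  refine ⟨l.take i, (l.take j).drop i, l.drop j, ?_, ?_, ?_, ?_⟩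
  · rw [hprefix, List.take_append_drop]
  · rw [← List.length_pos_iff, List.length_drop, List.length_take]; omega
  · rw [List.length_drop, List.length_take]; omega
  · rw [← walkEnd_append, hprefix]; exact hij.symm

variable [DecidableEq m]

lemma walkWeight_le_mPow (u : m) (l : List m) :
    walkWeight A u l ≤ mPow A l.length u (walkEnd u l) := by
  induction l generalizing u with
  | nil => simp [walkWeight, walkEnd, mPow]
  | cons z t ih => exact (mul_le_mul' le_rfl (ih z)).trans (le_mProd _ _ _ _ _)

lemma mPow_le_of_walks {k : ℕ} {u v : m} {C : NNReal}
    (h : ∀ l : List m, l.length = k → walkEnd u l = v → walkWeight A u l ≤ C) :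
    mPow A k u v ≤ C := by
  induction k generalizing u C with
  | zero =>
    by_cases huv : u = v
    · subst huv; simpa [mPow, walkWeight] using h [] rfl rfl
    · simp [mPow, huv]
  | succ k ih =>
    refine Finset.sup_le fun w _ => ?_
    rcases eq_or_ne (A u w) 0 with h0 | h0
    · simp [h0]
    · rw [mul_comm, ← le_div_iff₀ (pos_iff_ne_zero.2 h0)]
      refine ih fun l hl hv => ?_
      rw [le_div_iff₀ (pos_iff_ne_zero.2 h0), mul_comm]
      exact h (w :: l) (by simp [hl]) hv

end Walks

section Circuits

variable {m : Type*} [Fintype m] [DecidableEq m] (A : Matrix m m NNReal)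

lemma mPow_apply_self_le_mu_pow_of_le_card {ℓ : ℕ} (h1 : 1 ≤ ℓ) (h2 : ℓ ≤ Fintype.card m)
    (z : m) : mPow A ℓ z z ≤ mu A ^ ℓ := by
  have hmean : mPow A ℓ z z ^ (ℓ : ℝ)⁻¹ ≤ mu A :=
    (Finset.le_sup (f := fun i => mPow A ℓ i i ^ (ℓ : ℝ)⁻¹) (Finset.mem_univ z)).trans
      (Finset.le_sup (f := fun ℓ => Finset.univ.sup fun i => mPow A ℓ i i ^ (ℓ : ℝ)⁻¹)
        (Finset.mem_Icc.2 ⟨h1, h2⟩))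
  rwa [NNReal.rpow_inv_le_iff (by exact_mod_cast h1), NNReal.rpow_natCast] at hmean

lemma mu_lt_one_of_mPow_apply_self_lt_one
    (h : ∀ ℓ, 1 ≤ ℓ → ℓ ≤ Fintype.card m → ∀ z, mPow A ℓ z z < 1) : mu A < 1 := by
  refine (Finset.sup_lt_iff one_pos).2 fun ℓ hℓ => (Finset.sup_lt_iff one_pos).2 fun z _ => ?_
  obtain ⟨h1, h2⟩ := Finset.mem_Icc.1 hℓ
  rw [NNReal.rpow_inv_lt_iff (by exact_mod_cast h1), NNReal.one_rpow]
  exact h ℓ h1 h2 z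

lemma walkWeight_le_of_closed {z : m} {l : List m} (hlen : l.length ≤ Fintype.card m)
    (hcl : walkEnd z l = z) : walkWeight A z l ≤ mu A ^ l.length := by
  obtain rfl | hne := eq_or_ne l []
  · simp [walkWeight]
  · have hwt := walkWeight_le_mPow A z l
    rw [hcl] at hwt
    exact hwt.trans (mPow_apply_self_le_mu_pow_of_le_card A (List.length_pos_iff.2 hne) hlen z)

/-- Cutting out closed subwalks of length at most `card m`, each of weight at most
`μ(A) ^ length`, until at most `card m` steps remain. -/
lemma exists_short_walk (u : m) (l : List m) :
    ∃ l' : List m, l'.length ≤ Fintype.card m ∧ l'.length ≤ l.length ∧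
      walkEnd u l' = walkEnd u l ∧
      walkWeight A u l ≤ mu A ^ (l.length - l'.length) * walkWeight A u l' := by
  induction hk : l.length using Nat.strong_induction_on generalizing l with
  | _ k ih =>
  by_cases hl : l.length ≤ Fintype.card m
  · exact ⟨l, hl, hk.le, rfl, by rw [hk, Nat.sub_self, pow_zero, one_mul]⟩
  obtain ⟨l₁, l₂, l₃, rfl, hne, hlen, hcl⟩ := exists_closed_subwalk u l (not_le.1 hl)
  have hpos := List.length_pos_iff.2 hne
  simp only [List.length_append] at hk
  subst hk
  obtain ⟨l', hl'n, hl'len, hend, hwt⟩ :=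
    ih (l₁ ++ l₃).length (by rw [List.length_append]; omega) (l₁ ++ l₃) rfl
  simp only [List.length_append] at hl'len hwt ⊢
  refine ⟨l', hl'n, by omega, ?_, ?_⟩
  · rw [hend, walkEnd_append, walkEnd_append, walkEnd_append, hcl]
  · calc walkWeight A u (l₁ ++ l₂ ++ l₃)
        = walkWeight A (walkEnd u l₁) l₂ * walkWeight A u (l₁ ++ l₃) := by
          rw [walkWeight_append, walkWeight_append, walkWeight_append, walkEnd_append, hcl]; ring
      _ ≤ mu A ^ l₂.length * (mu A ^ (l₁.length + l₃.length - l'.length) * walkWeight A u l') :=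
          mul_le_mul' (walkWeight_le_of_closed A hlen hcl) hwt
      _ = mu A ^ (l₁.length + l₂.length + l₃.length - l'.length) * walkWeight A u l' := by
          rw [← mul_assoc, ← pow_add]; congr 2; omega

lemma mPow_apply_self_le_mu_pow (k : ℕ) (z : m) : mPow A k z z ≤ mu A ^ k := by
  refine mPow_le_of_walks A fun l hl hcl => ?_
  obtain ⟨l', hl'n, hl'l, hend, hwt⟩ := exists_short_walk A z l
  calc walkWeight A z l ≤ mu A ^ (l.length - l'.length) * mu A ^ l'.length :=
        hwt.trans (mul_le_mul' le_rfl (walkWeight_le_of_closed A hl'n (hend.trans hcl)))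
    _ = mu A ^ k := by rw [← pow_add, ← hl]; congr 1; omega

lemma exists_mPow_apply_le (hμ : mu A ≤ 1) :
    ∃ C, ∀ k u v, mPow A k u v ≤ C * mu A ^ (k - Fintype.card m) := by
  let S := Finset.range (Fintype.card m + 1) ×ˢ (Finset.univ : Finset (m × m))
  refine ⟨S.sup fun p => mPow A p.1 p.2.1 p.2.2, fun k u v =>
    mPow_le_of_walks A fun l hl hv => ?_⟩
  obtain ⟨l', hl'n, -, hend, hwt⟩ := exists_short_walk A u l
  have hmem : (l'.length, u, v) ∈ S := by simp [S]; omega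
  calc walkWeight A u l ≤ mu A ^ (l.length - l'.length) * walkWeight A u l' := hwt
    _ ≤ mu A ^ (k - Fintype.card m) * S.sup fun p => mPow A p.1 p.2.1 p.2.2 := by
        have hwt' := walkWeight_le_mPow A u l'
        rw [hend, hv] at hwt'
        exact mul_le_mul' (pow_le_pow_of_le_one zero_le hμ (by omega))
          (hwt'.trans (Finset.le_sup (f := fun p : ℕ × m × m => mPow A p.1 p.2.1 p.2.2) hmem))
    _ = _ := mul_comm _ _

lemma tendsto_mPow_atTop_nhds_zero (hμ : mu A < 1) : Tendsto (mPow A) atTop (𝓝 0) := by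
  obtain ⟨C, hC⟩ := exists_mPow_apply_le A hμ.le
  have hdecay : Tendsto (fun k => C * mu A ^ (k - Fintype.card m)) atTop (𝓝 0) := by
    simpa using ((NNReal.tendsto_pow_atTop_nhds_zero_of_lt_one hμ).comp
      (tendsto_sub_atTop_nat _)).const_mul C
  refine tendsto_pi_nhds.2 fun u => tendsto_pi_nhds.2 fun v => ?_
  exact tendsto_of_tendsto_of_tendsto_of_le_of_le tendsto_const_nhds hdecay (fun _ => zero_le)
    fun k => hC k u v

end Circuits

section Critical

variable {m : Type*} [Fintype m] [DecidableEq m] (A : Matrix m m NNReal)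

/-- When `μ(A) ≤ 1`, these are the vertices lying on a circuit of geometric mean `1`, since
every circuit length `ℓ ≤ card m` divides `(card m)!`. -/
def criticalSet : Set m := {z | mPow A (Fintype.card m)! z z = 1}

open Classical in
noncomputable def offCritical : Matrix m m NNReal :=
  fun u v => if u ∈ criticalSet A ∨ v ∈ criticalSet A then 0 else A u v

lemma offCritical_le (u v : m) : offCritical A u v ≤ A u v := by
  unfold offCritical; split_ifs <;> simp

lemma mPow_offCritical_eq_zero {z : m} (hz : z ∈ criticalSet A) {k : ℕ} (hk : k ≠ 0) (v : m) :
    mPow (offCritical A) k z v = 0 := by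
  obtain ⟨k, rfl⟩ := Nat.exists_eq_succ_of_ne_zero hk
  simp [mPow, mProd, offCritical, hz]

lemma mu_offCritical_lt_one (hμ : mu A ≤ 1) : mu (offCritical A) < 1 := by
  refine mu_lt_one_of_mPow_apply_self_lt_one _ fun ℓ h1 h2 z => ?_
  by_cases hz : z ∈ criticalSet A
  · rw [mPow_offCritical_eq_zero A hz (by omega)]
    exact one_pos
  refine lt_of_not_ge fun hge => hz ?_
  obtain ⟨t, ht⟩ := Nat.dvd_factorial h1 h2
  refine le_antisymm ((mPow_apply_self_le_mu_pow A _ z).trans (pow_le_one₀ zero_le hμ)) ?_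
  rw [ht]
  exact one_le_mPow_mul A (hge.trans (mPow_mono _ (offCritical_le A) ℓ z z)) t

open Classical in
/-- The part `B_k` of `A^k` carried by walks through a critical vertex. -/
noncomputable def criticalPart (k : ℕ) : Matrix m m NNReal := fun u v =>
  ((Finset.univ.filter (· ∈ criticalSet A)) ×ˢ Finset.range (k + 1)).sup
    fun p => mPow A p.2 u p.1 * mPow A (k - p.2) p.1 v

lemma criticalPart_le_iff {k : ℕ} {u v : m} {C : NNReal} :
    criticalPart A k u v ≤ C ↔
      ∀ z ∈ criticalSet A, ∀ i ≤ k, mPow A i u z * mPow A (k - i) z v ≤ C := by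
  simp only [criticalPart, Finset.sup_le_iff, Finset.mem_product, Finset.mem_filter,
    Finset.mem_univ, true_and, Finset.mem_range, Nat.lt_succ_iff, and_imp, Prod.forall]
  exact ⟨fun h z hz i => h z i hz, fun h z i hz => h z hz i⟩

lemma le_criticalPart {k i : ℕ} {u z v : m} (hz : z ∈ criticalSet A) (hi : i ≤ k) :
    mPow A i u z * mPow A (k - i) z v ≤ criticalPart A k u v :=
  (criticalPart_le_iff A).1 le_rfl z hz i hi

lemma criticalPart_le_mPow (k : ℕ) (u v : m) : criticalPart A k u v ≤ mPow A k u v :=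
  (criticalPart_le_iff A).2 fun z _ i hi => by
    simpa [Nat.add_sub_cancel' hi] using mPow_mul_mPow_le A i (k - i) u z v

/-- Pumping a critical circuit of weight `1` into the walk. -/
lemma criticalPart_le_add (k : ℕ) (u v : m) :
    criticalPart A k u v ≤ criticalPart A (k + (Fintype.card m)!) u v :=
  (criticalPart_le_iff A).2 fun z hz i hi => by
    have hpump := mPow_mul_mPow_le A i (Fintype.card m)! u z z
    rw [show mPow A (Fintype.card m)! z z = 1 from hz, mul_one] at hpump
    calc mPow A i u z * mPow A (k - i) z v
        ≤ mPow A (i + (Fintype.card m)!) u z *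
            mPow A (k + (Fintype.card m)! - (i + (Fintype.card m)!)) z v := by
          rw [Nat.add_sub_add_right]; exact mul_le_mul' hpump le_rfl
      _ ≤ _ := le_criticalPart A hz (by omega)

lemma mul_criticalPart_le (k : ℕ) (u w v : m) :
    A u w * criticalPart A k w v ≤ criticalPart A (k + 1) u v := by
  rcases eq_or_ne (A u w) 0 with h0 | h0
  · simp [h0]
  rw [mul_comm, ← le_div_iff₀ (pos_iff_ne_zero.2 h0)]
  refine (criticalPart_le_iff A).2 fun z hz i hi => ?_
  rw [le_div_iff₀ (pos_iff_ne_zero.2 h0), mul_comm, ← mul_assoc]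
  calc A u w * mPow A i w z * mPow A (k - i) z v
      ≤ mPow A (i + 1) u z * mPow A (k + 1 - (i + 1)) z v := by
        rw [Nat.add_sub_add_right]; exact mul_le_mul' (le_mProd _ _ _ _ _) le_rfl
    _ ≤ _ := le_criticalPart A hz (by omega)

lemma mPow_le_criticalPart_sup (k : ℕ) (u v : m) :
    mPow A k u v ≤ criticalPart A k u v ⊔ mPow (offCritical A) k u v := by
  induction k generalizing u with
  | zero => exact le_sup_right
  | succ k ih =>
    refine Finset.sup_le fun w _ => ?_
    by_cases hcrit : u ∈ criticalSet A ∨ w ∈ criticalSet A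
    · refine le_sup_of_le_left ?_
      rcases hcrit with hu | hw
      · refine (le_mProd A (mPow A k) u v w).trans ?_
        simpa [mPow] using le_criticalPart A hu (Nat.zero_le (k + 1)) (u := u) (v := v)
      · simpa [mPow_one] using le_criticalPart A hw (Nat.le_add_left 1 k) (u := u) (v := v)
    · have hoff : offCritical A u w = A u w := by simp [offCritical, hcrit]
      calc A u w * mPow A k w v
          ≤ A u w * criticalPart A k w v ⊔ offCritical A u w * mPow (offCritical A) k w v := by
            rw [hoff, ← mul_max]; exact mul_le_mul' le_rfl (ih w)
        _ ≤ _ := sup_le_sup (mul_criticalPart_le A k u w v) (le_mProd _ _ _ _ _)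

theorem exists_tendsto_mPow_mul_factorial_add (hμ : mu A ≤ 1) (j : ℕ) :
    ∃ L, Tendsto (fun k => mPow A (k * (Fintype.card m)! + j)) atTop (𝓝 L) := by
  set q := (Fintype.card m)!
  obtain ⟨C, hC⟩ := exists_mPow_apply_le A hμ
  have hidx : Tendsto (fun k => k * q + j) atTop atTop :=
    tendsto_atTop_mono (fun k => le_add_right (Nat.le_mul_of_pos_right k (Nat.factorial_pos _)))
      tendsto_id
  have hoff := (tendsto_mPow_atTop_nhds_zero _ (mu_offCritical_lt_one A hμ)).comp hidx
  refine ⟨fun u v => ⨆ k, criticalPart A (k * q + j) u v,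
    tendsto_pi_nhds.2 fun u => tendsto_pi_nhds.2 fun v => ?_⟩
  have hmono : Monotone fun k => criticalPart A (k * q + j) u v :=
    monotone_nat_of_le_succ fun k => by
      simpa only [add_mul, one_mul, add_right_comm] using criticalPart_le_add A (k * q + j) u v
  have hbdd : BddAbove (Set.range fun k => criticalPart A (k * q + j) u v) :=
    ⟨C, Set.forall_mem_range.2 fun k => (criticalPart_le_mPow A _ u v).trans
      ((hC _ u v).trans (mul_le_of_le_one_right zero_le (pow_le_one₀ zero_le hμ)))⟩
  have hlim := tendsto_atTop_ciSup hmono hbdd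
  refine tendsto_of_tendsto_of_tendsto_of_le_of_le hlim ?_
    (fun k => criticalPart_le_mPow A _ u v) (fun k => mPow_le_criticalPart_sup A _ u v)
  simpa using hlim.max (tendsto_pi_nhds.1 (tendsto_pi_nhds.1 hoff u) v)

end Critical

section powProd

variable {M : Type*} [Monoid M] {N : ℕ}

def powProd (B : Fin N → M) (hB : Pairwise fun i j => Commute (B i) (B j)) :
    (Fin N → Multiplicative ℕ) →* M :=
  MonoidHom.noncommPiCoprod (fun i => powersHom M (B i)) fun _ _ hij _ _ => (hB hij).pow_pow _ _

lemma powProd_apply (B : Fin N → M) (hB : Pairwise fun i j => Commute (B i) (B j))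
    (c : Fin N → Multiplicative ℕ) :
    powProd B hB c = (List.ofFn fun i => B i ^ (c i).toAdd).prod := by
  simp [powProd, MonoidHom.noncommPiCoprod, Finset.noncommProd]

lemma powProd_mulSingle (B : Fin N → M) (hB : Pairwise fun i j => Commute (B i) (B j))
    (i : Fin N) : powProd B hB (Pi.mulSingle i (.ofAdd 1)) = B i :=
  (MonoidHom.noncommPiCoprod_mulSingle _ i _).trans (pow_one _)

end powProd

def letterCount {N p : ℕ} (ω : Fin p → Fin N) (i : Fin N) : Multiplicative ℕ :=
  .ofAdd (Finset.univ.filter fun t => ω t = i).card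

lemma letterCount_succ {N p : ℕ} (ω : Fin (p + 1) → Fin N) :
    letterCount ω =
      Pi.mulSingle (ω (Fin.last p)) (.ofAdd 1) * letterCount (fun t => ω t.castSucc) := by
  ext i
  simp only [letterCount, Pi.mul_apply, toAdd_mul, toAdd_ofAdd, Finset.card_filter,
    Fin.sum_univ_castSucc]
  rcases eq_or_ne (ω (Fin.last p)) i with h | h
  · subst h; simp; ring
  · simp [h, Ne.symm h]

section Words

variable {m : Type*} [Fintype m] [DecidableEq m]

lemma toMaxTimes_wordProd {N : ℕ} (A : Fin N → Matrix m m NNReal)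
    (hA : Pairwise fun i j => Commute (toMaxTimes (A i)) (toMaxTimes (A j))) {p : ℕ}
    (ω : Fin p → Fin N) :
    toMaxTimes (wordProd A ω) = powProd (fun i => toMaxTimes (A i)) hA (letterCount ω) := by
  induction p with
  | zero =>
    rw [show letterCount ω = 1 from funext fun i => rfl, map_one]; rfl
  | succ p ih =>
    rw [letterCount_succ, map_mul, powProd_mulSingle, ← ih, ← toMaxTimes_mProd]; rfl

lemma mPow_wordProd {N p : ℕ} {A : Fin N → Matrix m m NNReal}
    (hcomm : ∀ i i', mProd (A i) (A i') = mProd (A i') (A i)) (ω : Fin p → Fin N) (M : ℕ) :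
    mPow (wordProd A ω) M =
      seqProd fun i => mPow (mPow (A i) M) (Finset.univ.filter fun t => ω t = i).card := by
  have hA : Pairwise fun i j => Commute (toMaxTimes (A i)) (toMaxTimes (A j)) :=
    fun i j _ => commute_toMaxTimes (hcomm i j)
  apply toMaxTimes.injective
  rw [toMaxTimes_mPow, toMaxTimes_wordProd A hA,
    ← map_pow, powProd_apply, toMaxTimes_seqProd]
  simp [toMaxTimes_mPow, letterCount, ← pow_mul]

end Words

theorem stmt_1 (n N : ℕ) (A : Fin N → Matrix (Fin n) (Fin n) NNReal)
    (hcomm : ∀ i i', mProd (A i) (A i') = mProd (A i') (A i))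
    (hmu : ∀ i, mu (A i) ≤ 1) :
    ∃ q : ℕ, 1 ≤ q ∧ ∃ Atil : Fin N → ℕ → Matrix (Fin n) (Fin n) NNReal,
      (∀ i, ∀ j : ℕ, 1 ≤ j → j ≤ q →
        Tendsto (fun k => mPow (A i) (k * q + j)) atTop (nhds (Atil i j))) ∧
      (∀ p : ℕ, 1 ≤ p → ∀ ω : Fin p → Fin N, ∀ j : ℕ, 1 ≤ j → j ≤ q →
        Tendsto (fun k => mPow (wordProd A ω) (k * q + j)) atTop
          (nhds (seqProd fun i =>
            mPow (Atil i j) (Finset.univ.filter (fun t => ω t = i)).card))) := by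
  choose Atil hAtil using fun i j => exists_tendsto_mPow_mul_factorial_add (A i) (hmu i) j
  refine ⟨_, Nat.factorial_pos _, Atil, fun i j _ _ => hAtil i j, fun p _ ω j _ _ => ?_⟩
  simp only [mPow_wordProd hcomm ω]
  exact tendsto_seqProd fun i => tendsto_mPow (hAtil i j) _
end

section
/- Let A_1, …, A_N be n×n nonnegative matrices with μ(A_i) ≤ 1 for every i, and suppose there is a nonempty set E = {v_1, …, v_m} of common max eigenvectors: each v_t ∈ ℝ_{≥0}^n is nonzero and for every i there is λ_{i,t} ≥ 0 with A_i ⊗ v_t = λ_{i,t}·v_t. Let p ≥ 1 and let ω ∈ {1,…,N}^p be a word containing every letter 1, …, N at least once, with associated product A_ω. Then for every x of the form x = α_1 v_1 ⊕ α_2 v_2 ⊕ ⋯ ⊕ α_m v_m (entrywise maximum, with α_t ≥ 0), the sequence A_ω^{⊗k} ⊗ x converges, as k → ∞, to a vector ξ_x satisfying A_i ⊗ ξ_x = ξ_x for every i = 1, …, N. -/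
open Filter Topology

/-!
Every common eigenvector `v t` is an eigenvector of `A_ω` with eigenvalue `c t = ∏ λ_{ω s, t}`,
and every `λ_{i,t} ≤ μ(A_i) ≤ 1`: following edges that attain the maximum in `A ⊗ v` from the
support of `v` closes a circuit whose geometric mean is at least the eigenvalue. Since `⊗`
distributes over `⊕`, `A_ω^k ⊗ x = ⊕_t α_t c_t^k v_t`, which converges to the max-combination of
those `v t` with `c t = 1`. As every letter occurs in `ω`, `c t = 1` forces `λ_{i,t} = 1` for all
`i`, so the limit is fixed by every `A i`.
-/

open Finset

variable {ι κ : Type*}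

lemma mVec_mProd [Fintype ι] (A B : Matrix ι ι NNReal) (x : ι → NNReal) :
    mVec (mProd A B) x = mVec A (mVec B x) := by
  funext i
  simp only [mVec, mProd, NNReal.finset_sup_mul, NNReal.mul_finset_sup, mul_assoc]
  exact Finset.sup_comm _ _ _

lemma mVec_one [Fintype ι] [DecidableEq ι] (x : ι → NNReal) :
    mVec (1 : Matrix ι ι NNReal) x = x := by
  funext i
  refine le_antisymm (Finset.sup_le fun k _ => ?_) ?_
  · rcases eq_or_ne i k with rfl | h
    · simp
    · simp [Matrix.one_apply_ne h]
  · simpa [mVec] using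
      Finset.le_sup (f := fun k => (1 : Matrix ι ι NNReal) i k * x k) (mem_univ i)

lemma mVec_smul [Fintype ι] (A : Matrix ι ι NNReal) (c : NNReal) (y : ι → NNReal) :
    mVec A (c • y) = c • mVec A y := by
  funext i
  simp only [mVec, Pi.smul_apply, smul_eq_mul, NNReal.mul_finset_sup, mul_left_comm]

def maxComb [Fintype κ] (α : κ → NNReal) (v : κ → ι → NNReal) : ι → NNReal :=
  fun j => univ.sup fun t => α t * v t j

lemma mVec_maxComb [Fintype ι] [Fintype κ] (A : Matrix ι ι NNReal) (α : κ → NNReal)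
    (v : κ → ι → NNReal) :
    mVec A (maxComb α v) = maxComb α fun t => mVec A (v t) := by
  funext i
  simp only [mVec, maxComb, NNReal.mul_finset_sup, mul_left_comm (A i _)]
  exact Finset.sup_comm _ _ _

lemma mVec_maxComb_of_eigen [Fintype ι] [Fintype κ] {A : Matrix ι ι NNReal}
    {v : κ → ι → NNReal} {c : κ → NNReal}
    (h : ∀ t, mVec A (v t) = c t • v t) (α : κ → NNReal) :
    mVec A (maxComb α v) = maxComb (α * c) v := by
  funext i
  simp only [mVec_maxComb, h, maxComb, Pi.smul_apply, smul_eq_mul, Pi.mul_apply, mul_assoc]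

lemma mVec_mPow_maxComb_of_eigen [Fintype ι] [DecidableEq ι] [Fintype κ] {A : Matrix ι ι NNReal}
    {v : κ → ι → NNReal} {c : κ → NNReal} (h : ∀ t, mVec A (v t) = c t • v t)
    (α : κ → NNReal) (k : ℕ) :
    mVec (mPow A k) (maxComb α v) = maxComb (α * c ^ k) v := by
  induction k with
  | zero => simp [mPow, mVec_one]
  | succ k ih => rw [mPow, mVec_mProd, ih, mVec_maxComb_of_eigen h, pow_succ, mul_assoc]

lemma tendsto_maxComb [Fintype κ] {γ : Type*} {l : Filter γ} {β : γ → κ → NNReal} {α : κ → NNReal}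
    (h : Tendsto β l (𝓝 α)) (v : κ → ι → NNReal) :
    Tendsto (fun k => maxComb (β k) v) l (𝓝 (maxComb α v)) :=
  tendsto_pi_nhds.2 fun _ => Tendsto.finset_sup_nhds_apply fun t _ =>
    (tendsto_pi_nhds.1 h t).mul_const _

lemma mVec_wordProd_of_eigen [Fintype ι] [DecidableEq ι] {N : ℕ}
    {A : Fin N → Matrix ι ι NNReal} {v : ι → NNReal} {lam : Fin N → NNReal}
    (h : ∀ i, mVec (A i) v = lam i • v) :
    ∀ {p : ℕ} (ω : Fin p → Fin N), mVec (wordProd A ω) v = (∏ s, lam (ω s)) • v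
  | 0, _ => by simp [wordProd, mVec_one]
  | p + 1, ω => by
    rw [wordProd, mVec_mProd, mVec_wordProd_of_eigen h, mVec_smul, h, smul_smul,
      Fin.prod_univ_castSucc, mul_comm]

lemma prod_path_le_mPow [Fintype ι] [DecidableEq ι] (A : Matrix ι ι NNReal) :
    ∀ (ℓ : ℕ) (g : ℕ → ι), ∏ s ∈ range ℓ, A (g s) (g (s + 1)) ≤ mPow A ℓ (g 0) (g ℓ)
  | 0, g => by simp [mPow]
  | ℓ + 1, g =>
    calc ∏ s ∈ range (ℓ + 1), A (g s) (g (s + 1))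
        = A (g 0) (g 1) * ∏ s ∈ range ℓ, A (g (s + 1)) (g (s + 1 + 1)) := by
          rw [prod_range_succ', mul_comm]
      _ ≤ A (g 0) (g 1) * mPow A ℓ (g 1) (g (ℓ + 1)) :=
          mul_le_mul_right (prod_path_le_mPow A ℓ fun s => g (s + 1)) _
      _ ≤ mPow A (ℓ + 1) (g 0) (g (ℓ + 1)) :=
          Finset.le_sup (f := fun k => A (g 0) k * mPow A ℓ k (g (ℓ + 1))) (mem_univ (g 1))

lemma le_mu_of_pow_le_mPow [Fintype ι] [DecidableEq ι] {A : Matrix ι ι NNReal} {ℓ : ℕ}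
    (hℓ : ℓ ∈ Icc 1 (Fintype.card ι)) {c : NNReal} {i : ι} (h : c ^ ℓ ≤ mPow A ℓ i i) :
    c ≤ mu A := by
  have hℓ0 : (ℓ : ℝ) ≠ 0 := by norm_cast; linarith [(mem_Icc.1 hℓ).1]
  calc c = (c ^ ℓ) ^ (ℓ : ℝ)⁻¹ := by
        rw [← NNReal.rpow_natCast, ← NNReal.rpow_mul, mul_inv_cancel₀ hℓ0, NNReal.rpow_one]
    _ ≤ mPow A ℓ i i ^ (ℓ : ℝ)⁻¹ := NNReal.rpow_le_rpow h (by positivity)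
    _ ≤ mu A := le_trans
        (Finset.le_sup (f := fun i => mPow A ℓ i i ^ (ℓ : ℝ)⁻¹) (mem_univ i))
        (Finset.le_sup (f := fun ℓ => univ.sup fun i => mPow A ℓ i i ^ (ℓ : ℝ)⁻¹) hℓ)

lemma exists_apply_add_eq_le_card [Fintype ι] (g : ℕ → ι) :
    ∃ a ℓ, ℓ ∈ Icc 1 (Fintype.card ι) ∧ g (a + ℓ) = g a := by
  obtain ⟨a, b, hab, hg⟩ := Fintype.exists_ne_map_eq_of_card_lt
    (fun s : Fin (Fintype.card ι + 1) => g s) (by simp)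
  wlog hlt : a < b generalizing a b
  · exact this b a hab.symm hg.symm (lt_of_le_of_ne (not_lt.1 hlt) hab.symm)
  refine ⟨a, b - a, mem_Icc.2 ⟨by omega, by omega⟩, ?_⟩
  rw [Nat.add_sub_cancel' (Fin.lt_def.1 hlt).le]
  exact hg.symm

lemma pow_mul_le_prod_path {A : Matrix ι ι NNReal} {v : ι → NNReal} {lam : NNReal} {g : ℕ → ι}
    (hg : ∀ s, lam * v (g s) ≤ A (g s) (g (s + 1)) * v (g (s + 1))) :
    ∀ ℓ, lam ^ ℓ * v (g 0) ≤ (∏ s ∈ range ℓ, A (g s) (g (s + 1))) * v (g ℓ)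
  | 0 => by simp
  | ℓ + 1 =>
    calc lam ^ (ℓ + 1) * v (g 0) = lam * (lam ^ ℓ * v (g 0)) := by ring
      _ ≤ lam * ((∏ s ∈ range ℓ, A (g s) (g (s + 1))) * v (g ℓ)) :=
          mul_le_mul_right (pow_mul_le_prod_path hg ℓ) _
      _ = (∏ s ∈ range ℓ, A (g s) (g (s + 1))) * (lam * v (g ℓ)) := by ring
      _ ≤ (∏ s ∈ range ℓ, A (g s) (g (s + 1))) * (A (g ℓ) (g (ℓ + 1)) * v (g (ℓ + 1))) :=
          mul_le_mul_right (hg ℓ) _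
      _ = (∏ s ∈ range (ℓ + 1), A (g s) (g (s + 1))) * v (g (ℓ + 1)) := by
          rw [prod_range_succ, mul_assoc]

lemma exists_mul_le_of_mVec_eq_smul [Fintype ι] {A : Matrix ι ι NNReal} {v : ι → NNReal}
    {lam : NNReal} (h : mVec A v = lam • v) (j : ι) : ∃ k, lam * v j ≤ A j k * v k := by
  obtain ⟨k, -, hk⟩ := exists_mem_eq_sup univ ⟨j, mem_univ j⟩ fun k => A j k * v k
  exact ⟨k, (congrFun h j).symm.trans hk |>.le⟩

lemma le_mu_of_mVec_eq_smul [Fintype ι] [DecidableEq ι] {A : Matrix ι ι NNReal} {v : ι → NNReal}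
    (hv : v ≠ 0) {lam : NNReal} (h : mVec A v = lam • v) : lam ≤ mu A := by
  rcases eq_or_ne lam 0 with rfl | hlam
  · exact zero_le
  obtain ⟨j₀, hj₀⟩ := Function.ne_iff.1 hv
  choose next hnext using exists_mul_le_of_mVec_eq_smul h
  set g : ℕ → ι := fun s => next^[s] j₀
  have hg : ∀ s, lam * v (g s) ≤ A (g s) (g (s + 1)) * v (g (s + 1)) := fun s => by
    simpa only [g, Function.iterate_succ_apply'] using hnext (g s)
  have hsupp : ∀ s, v (g s) ≠ 0 := by
    intro s
    induction s with
    | zero => exact hj₀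
    | succ s ih =>
      intro h0
      have := hg s
      rw [h0, mul_zero, nonpos_iff_eq_zero] at this
      exact mul_ne_zero hlam ih this
  obtain ⟨a, ℓ, hℓ, hcycle⟩ := exists_apply_add_eq_le_card g
  have hpow : lam ^ ℓ * v (g a) ≤ mPow A ℓ (g a) (g a) * v (g a) :=
    calc lam ^ ℓ * v (g a) ≤ (∏ s ∈ range ℓ, A (g (a + s)) (g (a + s + 1))) * v (g (a + ℓ)) :=
          pow_mul_le_prod_path (g := fun s => g (a + s)) (fun s => hg (a + s)) ℓ
      _ ≤ mPow A ℓ (g a) (g (a + ℓ)) * v (g (a + ℓ)) :=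
          mul_le_mul_left (prod_path_le_mPow A ℓ fun s => g (a + s)) _
      _ = mPow A ℓ (g a) (g a) * v (g a) := by rw [hcycle]
  exact le_mu_of_pow_le_mPow hℓ (le_of_mul_le_mul_right hpow (pos_iff_ne_zero.2 (hsupp a)))

lemma tendsto_pow_atTop_of_le_one {c : NNReal} (hc : c ≤ 1) :
    Tendsto (c ^ ·) atTop (𝓝 (if c = 1 then 1 else 0)) := by
  rcases hc.eq_or_lt with rfl | hlt
  · simp
  · simpa [hlt.ne] using NNReal.tendsto_pow_atTop_nhds_zero_of_lt_one hlt

theorem stmt_2_general (n N m p : ℕ) (A : Fin N → Matrix (Fin n) (Fin n) NNReal)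
    (hmu : ∀ i, mu (A i) ≤ 1)
    (v : Fin m → (Fin n → NNReal)) (hv0 : ∀ t, v t ≠ 0)
    (heig : ∀ i t, ∃ lam : NNReal, mVec (A i) (v t) = fun j => lam * v t j)
    (ω : Fin p → Fin N) (hω : ∀ i : Fin N, ∃ t, ω t = i)
    (α : Fin m → NNReal) (x : Fin n → NNReal)
    (hx : x = fun j => Finset.univ.sup fun t => α t * v t j) :
    ∃ ξ : Fin n → NNReal,
      Tendsto (fun k => mVec (mPow (wordProd A ω) k) x) atTop (nhds ξ) ∧
        ∀ i, mVec (A i) ξ = ξ := by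
  choose lam hlam using heig
  have hlam_le : ∀ i t, lam i t ≤ 1 := fun i t =>
    (le_mu_of_mVec_eq_smul (hv0 t) (hlam i t)).trans (hmu i)
  set c : Fin m → NNReal := fun t => ∏ s, lam (ω s) t
  have hc_le (t) : c t ≤ 1 := prod_le_one' fun s _ => hlam_le (ω s) t
  have hlam_eq (i t) (hct : c t = 1) : lam i t = 1 := by
    obtain ⟨s, rfl⟩ := hω i
    exact congrFun ((Fintype.prod_eq_one_iff_of_le_one fun s => hlam_le (ω s) t).1 hct) s
  set L : Fin m → NNReal := fun t => if c t = 1 then 1 else 0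
  refine ⟨maxComb (α * L) v, ?_, fun i => ?_⟩
  · have hW (t) : mVec (wordProd A ω) (v t) = c t • v t :=
      mVec_wordProd_of_eigen (fun i => hlam i t) ω
    obtain rfl : x = maxComb α v := hx
    simp only [mVec_mPow_maxComb_of_eigen hW]
    exact tendsto_maxComb (tendsto_const_nhds.mul
      (tendsto_pi_nhds.2 fun t => tendsto_pow_atTop_of_le_one (hc_le t))) v
  · rw [mVec_maxComb_of_eigen (hlam i)]
    congr 1
    funext t
    by_cases hct : c t = 1
    · simp [hlam_eq i t hct]
    · simp [L, hct]

theorem stmt_2 (n N m p : ℕ) (A : Fin N → Matrix (Fin n) (Fin n) NNReal)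
    (hmu : ∀ i, mu (A i) ≤ 1)
    (hm : 1 ≤ m) (v : Fin m → (Fin n → NNReal)) (hv0 : ∀ t, v t ≠ 0)
    (heig : ∀ i t, ∃ lam : NNReal, mVec (A i) (v t) = fun j => lam * v t j)
    (hp : 1 ≤ p) (ω : Fin p → Fin N) (hω : ∀ i : Fin N, ∃ t, ω t = i)
    (α : Fin m → NNReal) (x : Fin n → NNReal)
    (hx : x = fun j => Finset.univ.sup fun t => α t * v t j) :
    ∃ ξ : Fin n → NNReal,
      Tendsto (fun k => mVec (mPow (wordProd A ω) k) x) atTop (nhds ξ) ∧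
        ∀ i, mVec (A i) ξ = ξ :=
  stmt_2_general n N m p A hmu v hv0 heig ω hω α x hx
end
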